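/- Let g(y) = (y/2)(1 − √((2y−1)(3−2y))) for y ∈ [1, 3/2], which is strictly increasing from 0 to 3/4, and let α : [0, 3/4] → [1, 3/2] be its inverse. Define z(x,y) = 1 − y/α(xy) and Ω* = {(x,y) ∈ ℝ² : 3/4 < y < 1, 0 < x < 1/(4y)}. Then ∫∫_{Ω*} (∂z/∂x(x,y))² dx dy = +∞. -/

import Mathlib

/-! Near `u = 1` we have `gEx7 u = u (1 - √(1 - 4 (u - 1)²)) / 2 ≥ (u - 1)²` while
`gEx7Deriv u = O(u - 1)`. Hence the inverse `α` satisfies `α X - 1 ≤ √X` and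
`α' X = 1 / gEx7Deriv (α X) ≳ 1 / √X`, so `(∂z/∂x)² = y⁴ α'(xy)² / α(xy)⁴ ≥ 1 / (784 x)` on the
rectangle `(0, 1/8) × (3/4, 1) ⊆ Ω*`, and `1 / x` is not integrable at `0`. -/

open MeasureTheory Set Real

/-- g(y) = (y/2)·(1 − √((2y−1)(3−2y))) of Example 7. -/
noncomputable def gEx7 (y : ℝ) : ℝ :=
  y / 2 * (1 - Real.sqrt ((2 * y - 1) * (3 - 2 * y)))

/-- The subdomain Ω* = {(x,y) : 3/4 < y < 1, 0 < x < 1/(4y)}. -/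
def OmegaStar : Set (ℝ × ℝ) :=
  {p : ℝ × ℝ | 3/4 < p.2 ∧ p.2 < 1 ∧ 0 < p.1 ∧ p.1 < 1 / (4 * p.2)}

theorem Set.MapsTo.Ioo_of_rightInvOn {α β : Type*} [PartialOrder α] [Preorder β]
    {f : α → β} {g : β → α} {a b : α} (hmaps : MapsTo g (Icc (f a) (f b)) (Icc a b))
    (hinv : RightInvOn g f (Icc (f a) (f b))) : MapsTo g (Ioo (f a) (f b)) (Ioo a b) := by
  intro y hy
  obtain ⟨hgy₁, hgy₂⟩ := hmaps (Ioo_subset_Icc_self hy)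
  refine ⟨hgy₁.lt_of_ne ?_, hgy₂.lt_of_ne ?_⟩ <;> rintro h
  · exact hy.1.ne (by rw [h, hinv (Ioo_subset_Icc_self hy)])
  · exact hy.2.ne' (by rw [← h, hinv (Ioo_subset_Icc_self hy)])

theorem StrictMonoOn.continuousAt_of_rightInvOn {α β : Type*} [LinearOrder α]
    [TopologicalSpace α] [OrderTopology α] [DenselyOrdered α] [LinearOrder β]
    [TopologicalSpace β] [OrderTopology β]
    {f : α → β} {g : β → α} {a b : α} {y : β} (hf : StrictMonoOn f (Icc a b))
    (hmaps : MapsTo g (Icc (f a) (f b)) (Icc a b)) (hinv : RightInvOn g f (Icc (f a) (f b)))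
    (hy : y ∈ Ioo (f a) (f b)) : ContinuousAt g y := by
  have hgy : g y ∈ Ioo a b := hmaps.Ioo_of_rightInvOn hinv hy
  have hab : a ≤ b := (hgy.1.trans hgy.2).le
  have hfI : MapsTo f (Icc a b) (Icc (f a) (f b)) := fun x hx =>
    ⟨hf.monotoneOn ⟨le_rfl, hab⟩ hx hx.1, hf.monotoneOn hx ⟨hab, le_rfl⟩ hx.2⟩
  have hg : StrictMonoOn g (Icc (f a) (f b)) := fun y₁ h₁ y₂ h₂ h₁₂ => by
    rwa [← hf.lt_iff_lt (hmaps h₁) (hmaps h₂), hinv h₁, hinv h₂]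
  have himage : g '' Icc (f a) (f b) = Icc a b :=
    hmaps.image_subset.antisymm fun x hx =>
      ⟨f x, hfI hx, hf.injOn (hmaps (hfI hx)) hx (hinv (hfI hx))⟩
  refine hg.continuousAt_of_image_mem_nhds (Icc_mem_nhds hy.1 hy.2) ?_
  rw [himage]
  exact Icc_mem_nhds hgy.1 hgy.2

lemma lintegral_ofReal_inv_Ioo_zero_eq_top {b : ℝ} (hb : 0 < b) :
    ∫⁻ x in Ioo 0 b, ENNReal.ofReal x⁻¹ = ⊤ := by
  by_contra h
  rw [← Ne, lintegral_ofReal_ne_top_iff_integrable measurable_inv.aestronglyMeasurable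
    ((ae_restrict_iff' measurableSet_Ioo).2 (.of_forall fun x hx => inv_nonneg.2 hx.1.le)),
    ← IntegrableOn, ← intervalIntegrable_iff_integrableOn_Ioo_of_le hb.le,
    intervalIntegrable_inv_iff] at h
  rcases h with h | h
  · exact hb.ne h
  · exact h left_mem_uIcc

lemma setLIntegral_prod_fst {α β : Type*} [MeasurableSpace α] [MeasurableSpace β]
    {μ : Measure α} {ν : Measure β} [SFinite μ] [SFinite ν] {f : α → ENNReal} (hf : Measurable f)
    (s : Set α) (t : Set β) :
    ∫⁻ p in s ×ˢ t, f p.1 ∂μ.prod ν = (∫⁻ x in s, f x ∂μ) * ν t := by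
  rw [← Measure.prod_restrict]
  simpa using lintegral_prod_mul (μ := μ.restrict s) (ν := ν.restrict t) (g := fun _ => 1)
    hf.aemeasurable aemeasurable_const

lemma setLIntegral_ofReal_inv_Ioo_zero_prod_eq_top {b c : ℝ} (hb : 0 < b) (hc : 0 < c)
    {t : Set ℝ} (ht : volume t ≠ 0) :
    ∫⁻ p in Ioo 0 b ×ˢ t, ENNReal.ofReal (c * p.1)⁻¹ = ⊤ := by
  have hsplit (x : ℝ) : ENNReal.ofReal (c * x)⁻¹ = ENNReal.ofReal c⁻¹ * ENNReal.ofReal x⁻¹ := by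
    rw [mul_inv, ENNReal.ofReal_mul (inv_nonneg.2 hc.le)]
  simp_rw [Measure.volume_eq_prod, hsplit]
  rw [setLIntegral_prod_fst (measurable_inv.ennreal_ofReal.const_mul _), lintegral_const_mul _
    measurable_inv.ennreal_ofReal, lintegral_ofReal_inv_Ioo_zero_eq_top hb,
    ENNReal.mul_top (by simpa using hc), ENNReal.top_mul ht]

lemma gEx7_one : gEx7 1 = 0 := by norm_num [gEx7]

lemma gEx7_three_halves : gEx7 (3 / 2) = 3 / 4 := by norm_num [gEx7]

noncomputable def gEx7Deriv (u : ℝ) : ℝ :=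
  (1 - √((2 * u - 1) * (3 - 2 * u))) / 2 + 2 * u * (u - 1) / √((2 * u - 1) * (3 - 2 * u))

lemma hasDerivAt_gEx7 {u : ℝ} (hu : u ∈ Ioo (1 : ℝ) (3 / 2)) :
    HasDerivAt gEx7 (gEx7Deriv u) u := by
  have hpos : 0 < (2 * u - 1) * (3 - 2 * u) := by nlinarith [hu.1, hu.2]
  have hdiscr : HasDerivAt (fun v : ℝ => (2 * v - 1) * (3 - 2 * v)) (8 - 8 * u) u :=
    ((((hasDerivAt_id' u).const_mul 2).sub_const 1).fun_mul
      (((hasDerivAt_id' u).const_mul 2).const_sub 3)).congr_deriv (by ring)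
  have hg := ((hasDerivAt_id' u).div_const 2).mul ((hdiscr.sqrt hpos.ne').const_sub 1)
  refine hg.congr_deriv ?_
  have hs : 0 < √((2 * u - 1) * (3 - 2 * u)) := Real.sqrt_pos.2 hpos
  unfold gEx7Deriv
  field_simp
  ring

lemma gEx7Deriv_pos {u : ℝ} (hu : u ∈ Ioo (1 : ℝ) (3 / 2)) : 0 < gEx7Deriv u := by
  have hpos : 0 < (2 * u - 1) * (3 - 2 * u) := by nlinarith [hu.1, hu.2]
  have hs : √((2 * u - 1) * (3 - 2 * u)) < 1 := by
    rw [Real.sqrt_lt' one_pos]; nlinarith [hu.1, hu.2]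
  have : 0 < 2 * u * (u - 1) / √((2 * u - 1) * (3 - 2 * u)) :=
    div_pos (by nlinarith [hu.1]) (Real.sqrt_pos.2 hpos)
  unfold gEx7Deriv; linarith

lemma strictMonoOn_gEx7 : StrictMonoOn gEx7 (Icc 1 (3 / 2)) := by
  refine strictMonoOn_of_deriv_pos (convex_Icc _ _) (by unfold gEx7; fun_prop) fun u hu => ?_
  rw [interior_Icc] at hu
  rw [(hasDerivAt_gEx7 hu).deriv]
  exact gEx7Deriv_pos hu

lemma sq_sub_one_le_gEx7 {u : ℝ} (hu : u ∈ Icc (1 : ℝ) (3 / 2)) : (u - 1) ^ 2 ≤ gEx7 u := by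
  have hs := Real.sq_sqrt (show 0 ≤ (2 * u - 1) * (3 - 2 * u) by nlinarith [hu.1, hu.2])
  have hs₀ := Real.sqrt_nonneg ((2 * u - 1) * (3 - 2 * u))
  set s := √((2 * u - 1) * (3 - 2 * u))
  have hs₁ : s ≤ 1 := by nlinarith [sq_nonneg (u - 1)]
  -- `(1 - s) (1 + s) = 4 (u - 1)²` with `1 + s ≤ 2`
  have : 2 * (u - 1) ^ 2 ≤ 1 - s := by nlinarith
  unfold gEx7; nlinarith [hu.1]

lemma gEx7Deriv_le {u : ℝ} (hu : u ∈ Ioo (1 : ℝ) (3 / 2)) (hu' : 8 * (u - 1) ^ 2 < 1) :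
    gEx7Deriv u ≤ 7 * (u - 1) := by
  have hs := Real.sq_sqrt (show 0 ≤ (2 * u - 1) * (3 - 2 * u) by nlinarith [hu.1, hu.2])
  have hs₀ := Real.sqrt_nonneg ((2 * u - 1) * (3 - 2 * u))
  set s := √((2 * u - 1) * (3 - 2 * u))
  have hs₁ : 1 / 2 < s := by nlinarith
  have h₁ : (1 - s) / 2 ≤ u - 1 := by nlinarith [hu.1, hu.2]
  have h₂ : 2 * u * (u - 1) / s ≤ 6 * (u - 1) := by
    rw [div_le_iff₀ (by linarith)]; nlinarith [hu.1, hu.2]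
  unfold gEx7Deriv; linarith

lemma hasDerivAt_gEx7_rightInv {α : ℝ → ℝ} (hmaps : MapsTo α (Icc 0 (3 / 4)) (Icc 1 (3 / 2)))
    (hinv : RightInvOn α gEx7 (Icc 0 (3 / 4))) {X : ℝ} (hX : X ∈ Ioo (0 : ℝ) (3 / 4)) :
    HasDerivAt α (gEx7Deriv (α X))⁻¹ X := by
  rw [← gEx7_one, ← gEx7_three_halves] at hmaps hinv hX
  have hαX := hmaps.Ioo_of_rightInvOn hinv hX
  refine .of_local_left_inverse (strictMonoOn_gEx7.continuousAt_of_rightInvOn hmaps hinv hX)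
    (hasDerivAt_gEx7 hαX) (gEx7Deriv_pos hαX).ne' ?_
  filter_upwards [Ioo_mem_nhds hX.1 hX.2] with X' hX' using hinv (Ioo_subset_Icc_self hX')

noncomputable def zEx7 (α : ℝ → ℝ) (x y : ℝ) : ℝ := 1 - y / α (x * y)

lemma hasDerivAt_zEx7 {α : ℝ → ℝ} (hmaps : MapsTo α (Icc 0 (3 / 4)) (Icc 1 (3 / 2)))
    (hinv : RightInvOn α gEx7 (Icc 0 (3 / 4))) {x y : ℝ} (hxy : x * y ∈ Ioo (0 : ℝ) (3 / 4)) :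
    HasDerivAt (fun x => zEx7 α x y) (y ^ 2 / α (x * y) ^ 2 * (gEx7Deriv (α (x * y)))⁻¹) x := by
  have hα := (hasDerivAt_gEx7_rightInv hmaps hinv hxy).comp x (hasDerivAt_mul_const y)
  have hne : α (x * y) ≠ 0 := (zero_lt_one.trans_le (hmaps (Ioo_subset_Icc_self hxy)).1).ne'
  refine (((hasDerivAt_const x y).div hα hne).const_sub 1).congr_deriv ?_
  simp only [Function.comp_apply]
  field_simp
  ring

lemma inv_le_sq_deriv_zEx7 {α : ℝ → ℝ} (hmaps : MapsTo α (Icc 0 (3 / 4)) (Icc 1 (3 / 2)))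
    (hinv : RightInvOn α gEx7 (Icc 0 (3 / 4))) {x y : ℝ} (hx : x ∈ Ioo (0 : ℝ) (1 / 8))
    (hy : y ∈ Ioo (3 / 4 : ℝ) 1) :
    (784 * x)⁻¹ ≤ (deriv (fun x => zEx7 α x y) x) ^ 2 := by
  have hxy : x * y ∈ Ioo (0 : ℝ) (3 / 4) :=
    ⟨mul_pos hx.1 (by linarith [hy.1]), by nlinarith [hx.1, hx.2, hy.1, hy.2]⟩
  rw [(hasDerivAt_zEx7 hmaps hinv hxy).deriv]
  rw [← gEx7_one, ← gEx7_three_halves] at hmaps hinv hxy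
  set u := α (x * y)
  have hu : u ∈ Ioo 1 (3 / 2) := hmaps.Ioo_of_rightInvOn hinv hxy
  -- `gEx7 u = x y` forces `u - 1 ≤ √x`, and near `u = 1` the slope of `gEx7` is `O(u - 1)`
  have hux : (u - 1) ^ 2 < x := by
    have := sq_sub_one_le_gEx7 (Ioo_subset_Icc_self hu)
    rw [hinv (Ioo_subset_Icc_self hxy)] at this
    nlinarith [hx.1, hy.2]
  have hG₀ := gEx7Deriv_pos hu
  have hG : gEx7Deriv u ^ 2 ≤ 49 * x := by
    have := gEx7Deriv_le hu (by linarith [hx.2])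
    nlinarith
  have hyu : 1 / 4 ≤ y ^ 2 / u ^ 2 := by
    rw [le_div_iff₀ (by nlinarith [hu.1])]
    nlinarith [hu.1, hu.2, hy.1]
  calc (784 * x)⁻¹ = (1 / 4) ^ 2 / (49 * x) := by field_simp; norm_num
    _ ≤ (y ^ 2 / u ^ 2) ^ 2 / gEx7Deriv u ^ 2 :=
        div_le_div₀ (by positivity) (pow_le_pow_left₀ (by norm_num) hyu 2) (by positivity) hG
    _ = (y ^ 2 / u ^ 2 * (gEx7Deriv u)⁻¹) ^ 2 := by rw [mul_pow, inv_pow, div_eq_mul_inv _ (_ ^ 2)]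

lemma Ioo_prod_Ioo_subset_omegaStar : Ioo (0 : ℝ) (1 / 8) ×ˢ Ioo (3 / 4 : ℝ) 1 ⊆ OmegaStar := by
  rintro ⟨x, y⟩ ⟨hx, hy⟩
  refine ⟨hy.1, hy.2, hx.1, ?_⟩
  rw [lt_div_iff₀ (by linarith [hy.1])]
  nlinarith [hx.1, hx.2, hy.1, hy.2]

theorem stmt_18_general (α : ℝ → ℝ)
    (hinv₂ : ∀ X ∈ Icc (0:ℝ) (3/4), α X ∈ Icc (1:ℝ) (3/2) ∧ gEx7 (α X) = X) :
    StrictMonoOn gEx7 (Icc 1 (3/2)) ∧ gEx7 1 = 0 ∧ gEx7 (3/2) = 3/4 ∧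
    (∫⁻ p in OmegaStar,
      ENNReal.ofReal
        ((deriv (fun x => 1 - p.2 / α (x * p.2)) p.1) ^ 2) = ⊤) := by
  refine ⟨strictMonoOn_gEx7, gEx7_one, gEx7_three_halves, top_unique ?_⟩
  have hmaps : MapsTo α (Icc 0 (3 / 4)) (Icc 1 (3 / 2)) := fun X hX => (hinv₂ X hX).1
  have hinv : RightInvOn α gEx7 (Icc 0 (3 / 4)) := fun X hX => (hinv₂ X hX).2
  calc ⊤ = ∫⁻ p in Ioo (0 : ℝ) (1 / 8) ×ˢ Ioo (3 / 4 : ℝ) 1, ENNReal.ofReal (784 * p.1)⁻¹ :=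
        (setLIntegral_ofReal_inv_Ioo_zero_prod_eq_top (by norm_num) (by norm_num)
          (by norm_num)).symm
    _ ≤ ∫⁻ p in Ioo (0 : ℝ) (1 / 8) ×ˢ Ioo (3 / 4 : ℝ) 1,
          ENNReal.ofReal ((deriv (fun x => zEx7 α x p.2) p.1) ^ 2) :=
        setLIntegral_mono' (measurableSet_Ioo.prod measurableSet_Ioo) fun p hp =>
          ENNReal.ofReal_le_ofReal (inv_le_sq_deriv_zEx7 hmaps hinv hp.1 hp.2)
    _ ≤ _ := lintegral_mono_set Ioo_prod_Ioo_subset_omegaStar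

theorem stmt_18 (α : ℝ → ℝ)
    (hinv₁ : ∀ y ∈ Icc (1:ℝ) (3/2), α (gEx7 y) = y)
    (hinv₂ : ∀ X ∈ Icc (0:ℝ) (3/4), α X ∈ Icc (1:ℝ) (3/2) ∧ gEx7 (α X) = X) :
    StrictMonoOn gEx7 (Icc 1 (3/2)) ∧ gEx7 1 = 0 ∧ gEx7 (3/2) = 3/4 ∧
    (∫⁻ p in OmegaStar,
      ENNReal.ofReal
        ((deriv (fun x => 1 - p.2 / α (x * p.2)) p.1) ^ 2) = ⊤) :=
  stmt_18_general α hinv₂
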